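/- The q-Fibonacci polynomials satisfy the alternative recurrence f(n,x,s) = x f(n-1,x,qs) + q s f(n-2,x,q²s) for all n ≥ 2. -/
import Mathlib


/-- Carlitz q-Fibonacci polynomials. -/
def qFib (q x s : ℝ) : ℕ → ℝ
  | 0 => 0
  | 1 => 1
  | (n+2) => x * qFib q x s (n+1) + q^n * s * qFib q x s n

theorem qFib_alt_recurrence (q x s : ℝ) (n : ℕ) (hn : 2 ≤ n) :
    qFib q x s n
      = x * qFib q x (q*s) (n-1) + q * s * qFib q x (q^2*s) (n-2) := by
  obtain ⟨m, rfl⟩ : ∃ m, n = m + 2 := ⟨n - 2, by omega⟩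
  simp only [Nat.add_sub_cancel, show m + 2 - 1 = m + 1 from rfl]
  induction m using Nat.twoStepInduction generalizing s with
  | zero => simp [qFib]
  | one => simp [qFib]
  | more k ih1 ih2 =>
    have e1 := ih2 s (by omega)
    have e2 := ih1 s (by omega)
    show x * qFib q x s (k + 3) + q ^ (k + 2) * s * qFib q x s (k + 2)
        = x * (x * qFib q x (q*s) (k + 2) + q ^ (k + 1) * (q*s) * qFib q x (q*s) (k + 1))
        + q * s * (x * qFib q x (q^2*s) (k + 1) + q ^ k * (q^2*s) * qFib q x (q^2*s) k)
    rw [e1, e2]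
    ring
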